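/- If Φ is a Young function and w a nonnegative function with M_Φ w(x) < ∞ a.e., then for every 0 < δ < 1 the weight (M_Φ w)^δ belongs to A₁ with [(M_Φ w)^δ]_{A₁} ≤ c(n, δ), and for every λ > 0 the weight (M_Φ w)^{−λ} satisfies the reverse Hölder RH_∞ condition with [(M_Φ w)^{−λ}]_{RH_∞} ≤ c(n, λ). -/

import Mathlib

open MeasureTheory Set Filter ENNReal

noncomputable section

/-- `Q ⊆ ℝⁿ` is a cube (axis-parallel, with positive side length). -/
def IsCube {n : ℕ} (Q : Set (Fin n → ℝ)) : Prop :=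
  ∃ (a : Fin n → ℝ) (h : ℝ), 0 < h ∧ Q = Set.univ.pi fun i => Set.Ico (a i) (a i + h)

/-- The average `⟨w⟩_Q = (1/|Q|) ∫_Q w`. -/
def lavg {n : ℕ} (w : (Fin n → ℝ) → ℝ≥0∞) (Q : Set (Fin n → ℝ)) : ℝ≥0∞ :=
  (∫⁻ x in Q, w x) / volume Q

structure YoungFunction where
  toFun : ℝ → ℝ
  continuousOn : ContinuousOn toFun (Set.Ici 0)
  convexOn : ConvexOn ℝ (Set.Ici 0) toFun
  strictMonoOn : StrictMonoOn toFun (Set.Ici 0)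
  map_zero : toFun 0 = 0
  tendsto_zero : Tendsto (fun t => toFun t / t) (nhdsWithin 0 (Set.Ioi 0)) (nhds 0)
  tendsto_top : Tendsto (fun t => toFun t / t) atTop atTop

/-- The normalized Luxemburg norm
`‖f‖_{Φ,Q} = inf {λ > 0 : (1/|Q|) ∫_Q Φ(|f|/λ) ≤ 1}` (with value `∞` if no such `λ`). -/
def eLuxNorm {n : ℕ} (Φ : ℝ → ℝ) (Q : Set (Fin n → ℝ)) (f : (Fin n → ℝ) → ℝ) : ℝ≥0∞ :=
  sInf {lam : ℝ≥0∞ | ∃ l : ℝ, 0 < l ∧ lam = ENNReal.ofReal l ∧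
    (∫⁻ x in Q, ENNReal.ofReal (Φ (|f x| / l))) ≤ volume Q}

/-- The Orlicz maximal operator `M_Φ w(x) = sup_{Q ∋ x} ‖w‖_{Φ,Q}`. -/
def MOrlicz {n : ℕ} (Φ : ℝ → ℝ) (w : (Fin n → ℝ) → ℝ) (x : Fin n → ℝ) : ℝ≥0∞ :=
  ⨆ (Q : Set (Fin n → ℝ)) (_ : IsCube Q) (_ : x ∈ Q), eLuxNorm Φ Q w

/-- The `A₁` constant `[w]_{A₁} = sup_Q ⟨w⟩_Q · ess sup_Q w⁻¹`. -/
def A1Const {n : ℕ} (w : (Fin n → ℝ) → ℝ≥0∞) : ℝ≥0∞ :=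
  ⨆ (Q : Set (Fin n → ℝ)) (_ : IsCube Q),
    lavg w Q * essSup (fun x => (w x)⁻¹) (volume.restrict Q)

/-- The `RH_∞` constant `[v]_{RH_∞} = sup_Q (ess sup_Q v)/⟨v⟩_Q`. -/
def RHinftyConst {n : ℕ} (v : (Fin n → ℝ) → ℝ≥0∞) : ℝ≥0∞ :=
  ⨆ (Q : Set (Fin n → ℝ)) (_ : IsCube Q),
    essSup v (volume.restrict Q) / lavg v Q

/-!
On a cube `Q = cube a h` split `M_Φ w` into the contribution of cubes of side `> h`, which after
tripling contain `Q` and so are at most `3ⁿ ess inf_Q M_Φ w`, and of cubes of side `≤ h`, which lie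
in `3Q`. Since `‖w‖_{Φ,3Q} ≤ ess inf_Q M_Φ w`, the Luxemburg condition on `3Q` holds at levels `l`
arbitrarily close to `ess inf_Q M_Φ w`. For such `l`, a Vitali covering and the convexity of `Φ`
bound the set where the small cubes give more than `2ᵏ l` by `15ⁿ 2⁻ᵏ |Q|`, and summing
`(2ᵏ⁺¹ l)^δ` against these measures is a geometric series that converges because `δ < 1`.
Hence `⟨(M_Φ w)^δ⟩_Q ≤ c(n, δ) ess inf_Q (M_Φ w)^δ`, which is the `A₁` bound.

For `RH_∞`, `M_Φ w` is lower semicontinuous (a cube can be enlarged to a neighbourhood of itself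
at an arbitrarily small cost in volume), hence measurable, and Chebyshev's inequality for
`(M_Φ w)^{1/2}` shows that `(M_Φ w)^{-λ}` is at least a fixed fraction of `(ess inf_Q M_Φ w)^{-λ}`
on half of `Q`.
-/

open Topology

section Cube

variable {n : ℕ}

def cube (a : Fin n → ℝ) (h : ℝ) : Set (Fin n → ℝ) :=
  univ.pi fun i => Ico (a i) (a i + h)

def tripleCube (a : Fin n → ℝ) (h : ℝ) : Set (Fin n → ℝ) :=
  cube (fun i => a i - h) (3 * h)

theorem isCube_iff {Q : Set (Fin n → ℝ)} : IsCube Q ↔ ∃ a h, 0 < h ∧ Q = cube a h := Iff.rfl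

theorem mem_cube {a x : Fin n → ℝ} {h : ℝ} : x ∈ cube a h ↔ ∀ i, a i ≤ x i ∧ x i < a i + h := by
  simp [cube]

theorem isCube_cube (a : Fin n → ℝ) {h : ℝ} (hh : 0 < h) : IsCube (cube a h) := ⟨a, h, hh, rfl⟩

theorem isCube_tripleCube (a : Fin n → ℝ) {h : ℝ} (hh : 0 < h) : IsCube (tripleCube a h) :=
  isCube_cube _ (by positivity)

theorem measurableSet_cube (a : Fin n → ℝ) (h : ℝ) : MeasurableSet (cube a h) :=
  .univ_pi fun _ => measurableSet_Ico

theorem volume_cube (a : Fin n → ℝ) (h : ℝ) : volume (cube a h) = ENNReal.ofReal h ^ n := by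
  simp [cube, volume_pi_pi, Real.volume_Ico]

theorem volume_cube_mul (a b : Fin n → ℝ) {c : ℝ} (hc : 0 ≤ c) (h : ℝ) :
    volume (cube b (c * h)) = ENNReal.ofReal c ^ n * volume (cube a h) := by
  rw [volume_cube, volume_cube, ENNReal.ofReal_mul hc, mul_pow]

theorem volume_tripleCube (a : Fin n → ℝ) (h : ℝ) :
    volume (tripleCube a h) = 3 ^ n * volume (cube a h) := by
  rw [tripleCube, volume_cube_mul a _ (by norm_num), ENNReal.ofReal_ofNat]

theorem volume_cube_ne_zero (a : Fin n → ℝ) {h : ℝ} (hh : 0 < h) : volume (cube a h) ≠ 0 := by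
  simp [volume_cube, hh]

theorem volume_cube_ne_top (a : Fin n → ℝ) (h : ℝ) : volume (cube a h) ≠ ⊤ := by
  simp [volume_cube]

theorem interior_cube_nonempty (a : Fin n → ℝ) {h : ℝ} (hh : 0 < h) :
    (interior (cube a h)).Nonempty := by
  simp [cube, interior_pi_set finite_univ, univ_pi_nonempty_iff, hh]

theorem cube_subset_cube {a b : Fin n → ℝ} {h h' : ℝ} (hab : ∀ i, a i ≤ b i)
    (hend : ∀ i, b i + h' ≤ a i + h) : cube b h' ⊆ cube a h := fun _ hx =>
  mem_cube.2 fun i => ⟨(hab i).trans (mem_cube.1 hx i).1, (mem_cube.1 hx i).2.trans_le (hend i)⟩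

theorem cube_subset_of_inter_nonempty {a b : Fin n → ℝ} {h h' c d : ℝ} (hh' : h' ≤ c)
    (hd : h + 2 * c ≤ d) (hne : (cube b h' ∩ cube a h).Nonempty) :
    cube b h' ⊆ cube (fun i => a i - c) d := by
  obtain ⟨z, hzb, hza⟩ := hne
  refine cube_subset_cube (fun i => ?_) (fun i => ?_) <;>
    linarith [(mem_cube.1 hzb i).1, (mem_cube.1 hzb i).2, (mem_cube.1 hza i).1,
      (mem_cube.1 hza i).2]

theorem cube_subset_tripleCube (a : Fin n → ℝ) {h : ℝ} (hh : 0 < h) : cube a h ⊆ tripleCube a h :=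
  cube_subset_cube (fun i => by linarith) (fun i => by linarith)

theorem cube_mem_nhds {a x : Fin n → ℝ} {h ε : ℝ} (hx : x ∈ cube a h) (hε : 0 < ε) :
    cube (fun i => a i - ε) (h + 2 * ε) ∈ 𝓝 x :=
  set_pi_mem_nhds finite_univ fun i _ =>
    Ico_mem_nhds (by linarith [(mem_cube.1 hx i).1]) (by linarith [(mem_cube.1 hx i).2])

theorem exists_volume_cube_lt (a : Fin n → ℝ) {h : ℝ} {I : ℝ≥0∞}
    (hI : volume (cube a h) < I) : ∃ ε > 0, volume (cube (fun i => a i - ε) (h + 2 * ε)) < I := by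
  have hcont : Tendsto (fun ε : ℝ => ENNReal.ofReal (h + 2 * ε) ^ n) (𝓝[>] 0)
      (𝓝 (volume (cube a h))) := by
    have : Continuous fun ε : ℝ => ENNReal.ofReal (h + 2 * ε) ^ n :=
      (ENNReal.continuous_pow n).comp (ENNReal.continuous_ofReal.comp (by fun_prop))
    simpa [volume_cube] using (this.tendsto 0).mono_left nhdsWithin_le_nhds
  obtain ⟨ε, hεI, hε⟩ := ((hcont.eventually (gt_mem_nhds hI)).and self_mem_nhdsWithin).exists
  exact ⟨ε, hε, by rwa [volume_cube]⟩

theorem IsCube.volume_ne_zero {Q : Set (Fin n → ℝ)} (hQ : IsCube Q) : volume Q ≠ 0 := by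
  obtain ⟨a, h, hh, rfl⟩ := isCube_iff.1 hQ
  exact volume_cube_ne_zero a hh

theorem IsCube.volume_ne_top {Q : Set (Fin n → ℝ)} (hQ : IsCube Q) : volume Q ≠ ⊤ := by
  obtain ⟨a, h, -, rfl⟩ := isCube_iff.1 hQ
  exact volume_cube_ne_top a h

end Cube

namespace YoungFunction

variable (Φ : YoungFunction)

theorem monotoneOn : MonotoneOn Φ.toFun (Ici 0) := Φ.strictMonoOn.monotoneOn

theorem map_mul_le {θ s : ℝ} (hs : 0 ≤ s) (hθ0 : 0 ≤ θ) (hθ1 : θ ≤ 1) :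
    Φ.toFun (θ * s) ≤ θ * Φ.toFun s := by
  simpa [Φ.map_zero] using
    Φ.convexOn.2 (mem_Ici.2 hs) self_mem_Ici hθ0 (sub_nonneg.2 hθ1) (add_sub_cancel θ 1)

end YoungFunction

section Luxemburg

variable {n : ℕ} {Φ : YoungFunction} {w : (Fin n → ℝ) → ℝ} {Q R : Set (Fin n → ℝ)} {l : ℝ}

theorem lintegral_young_div_mul_le (μ : Measure (Fin n → ℝ)) (hl : 0 < l) {K : ℝ} (hK : 1 ≤ K) :
    ∫⁻ x, ENNReal.ofReal (Φ.toFun (|w x| / (K * l))) ∂μ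
      ≤ ENNReal.ofReal K⁻¹ * ∫⁻ x, ENNReal.ofReal (Φ.toFun (|w x| / l)) ∂μ := by
  rw [← lintegral_const_mul' _ _ ofReal_ne_top]
  refine lintegral_mono fun x => ?_
  rw [← ENNReal.ofReal_mul (by positivity), mul_comm K, ← div_div, div_eq_inv_mul _ K]
  exact ENNReal.ofReal_le_ofReal
    (Φ.map_mul_le (by positivity) (by positivity) (inv_le_one_of_one_le₀ hK))

theorem eLuxNorm_le_ofReal (hl : 0 < l)
    (hint : ∫⁻ x in Q, ENNReal.ofReal (Φ.toFun (|w x| / l)) ≤ volume Q) :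
    eLuxNorm Φ.toFun Q w ≤ ENNReal.ofReal l :=
  sInf_le ⟨l, hl, rfl, hint⟩

theorem volume_lt_lintegral_of_ofReal_lt_eLuxNorm (hl : 0 < l)
    (h : ENNReal.ofReal l < eLuxNorm Φ.toFun Q w) :
    volume Q < ∫⁻ x in Q, ENNReal.ofReal (Φ.toFun (|w x| / l)) := by
  contrapose! h
  exact eLuxNorm_le_ofReal hl h

theorem ofReal_le_eLuxNorm (hl : 0 < l)
    (h : volume Q < ∫⁻ x in Q, ENNReal.ofReal (Φ.toFun (|w x| / l))) :
    ENNReal.ofReal l ≤ eLuxNorm Φ.toFun Q w := by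
  refine le_sInf ?_
  rintro _ ⟨l', hl', rfl, hint⟩
  rw [ENNReal.ofReal_le_ofReal_iff hl'.le]
  by_contra! hlt
  refine (h.trans_le (le_trans (lintegral_mono fun x => ?_) hint)).false
  refine ENNReal.ofReal_le_ofReal (Φ.monotoneOn (mem_Ici.2 ?_) (mem_Ici.2 ?_)
    (div_le_div_of_nonneg_left (abs_nonneg _) hl' hlt.le)) <;> positivity

theorem eLuxNorm_le_mul_of_subset (hQR : Q ⊆ R) {K : ℝ} (hK : 1 ≤ K)
    (hvol : volume R ≤ ENNReal.ofReal K * volume Q) :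
    eLuxNorm Φ.toFun Q w ≤ ENNReal.ofReal K * eLuxNorm Φ.toFun R w := by
  have hK0 : ENNReal.ofReal K ≠ 0 := by simpa using zero_lt_one.trans_le hK
  rw [mul_comm, ← ENNReal.div_le_iff hK0 ofReal_ne_top]
  refine le_sInf ?_
  rintro _ ⟨l, hl, rfl, hint⟩
  rw [ENNReal.div_le_iff hK0 ofReal_ne_top, ← ENNReal.ofReal_mul hl.le, mul_comm l]
  refine eLuxNorm_le_ofReal (by positivity) ?_
  calc ∫⁻ x in Q, ENNReal.ofReal (Φ.toFun (|w x| / (K * l)))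
      ≤ ∫⁻ x in R, ENNReal.ofReal (Φ.toFun (|w x| / (K * l))) := lintegral_mono_set hQR
    _ ≤ ENNReal.ofReal K⁻¹ * ∫⁻ x in R, ENNReal.ofReal (Φ.toFun (|w x| / l)) :=
      lintegral_young_div_mul_le _ hl hK
    _ ≤ ENNReal.ofReal K⁻¹ * (ENNReal.ofReal K * volume Q) := by gcongr; exact hint.trans hvol
    _ = volume Q := by
      rw [← mul_assoc, ← ENNReal.ofReal_mul (by positivity),
        inv_mul_cancel₀ (by positivity), ENNReal.ofReal_one, one_mul]

theorem eLuxNorm_cube_le_tripleCube (b : Fin n → ℝ) {h : ℝ} (hh : 0 < h) :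
    eLuxNorm Φ.toFun (cube b h) w ≤ 3 ^ n * eLuxNorm Φ.toFun (tripleCube b h) w := by
  have h3 : ENNReal.ofReal (3 ^ n) = 3 ^ n := by rw [ENNReal.ofReal_pow (by norm_num)]; simp
  simpa [h3] using eLuxNorm_le_mul_of_subset (cube_subset_tripleCube b hh)
    (one_le_pow₀ (by norm_num : (1 : ℝ) ≤ 3)) (by rw [h3, volume_tripleCube])

end Luxemburg

section Maximal

variable {n : ℕ} {Φ : YoungFunction} {w : (Fin n → ℝ) → ℝ}

theorem eLuxNorm_le_MOrlicz {Q : Set (Fin n → ℝ)} (hQ : IsCube Q) {x : Fin n → ℝ} (hx : x ∈ Q) :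
    eLuxNorm Φ.toFun Q w ≤ MOrlicz Φ.toFun w x :=
  le_iSup₂_of_le Q hQ (le_iSup_of_le hx le_rfl)

theorem eLuxNorm_le_essInf_MOrlicz {Q R : Set (Fin n → ℝ)} (hQ : MeasurableSet Q) (hR : IsCube R)
    (hQR : Q ⊆ R) : eLuxNorm Φ.toFun R w ≤ essInf (MOrlicz Φ.toFun w) (volume.restrict Q) :=
  le_essInf_of_ae_le _ (ae_restrict_of_forall_mem hQ fun _ hy => eLuxNorm_le_MOrlicz hR (hQR hy))

theorem lowerSemicontinuous_MOrlicz (Φ : YoungFunction) (w : (Fin n → ℝ) → ℝ) :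
    LowerSemicontinuous (MOrlicz Φ.toFun w) := by
  intro x t ht
  obtain ⟨Q, hxQ, hQ, htQ⟩ : ∃ Q, x ∈ Q ∧ IsCube Q ∧ t < eLuxNorm Φ.toFun Q w := by
    simpa [MOrlicz, lt_iSup_iff] using ht
  obtain ⟨a, h, hh, rfl⟩ := isCube_iff.1 hQ
  obtain ⟨l, -, htl, hlQ⟩ := ENNReal.lt_iff_exists_real_btwn.1 htQ
  have hl : 0 < l := ENNReal.ofReal_pos.1 (zero_le.trans_lt htl)
  obtain ⟨ε, hε, hvol⟩ := exists_volume_cube_lt a (volume_lt_lintegral_of_ofReal_lt_eLuxNorm hl hlQ)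
  have hsub : cube a h ⊆ cube (fun i => a i - ε) (h + 2 * ε) :=
    cube_subset_cube (fun i => by linarith) (fun i => by linarith)
  have hnorm : ENNReal.ofReal l ≤ eLuxNorm Φ.toFun (cube (fun i => a i - ε) (h + 2 * ε)) w :=
    ofReal_le_eLuxNorm hl (hvol.trans_le (lintegral_mono_set hsub))
  filter_upwards [cube_mem_nhds hxQ hε] with y hy
  exact htl.trans_le (hnorm.trans (eLuxNorm_le_MOrlicz (isCube_cube _ (by positivity)) hy))

theorem measurable_MOrlicz (Φ : YoungFunction) (w : (Fin n → ℝ) → ℝ) :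
    Measurable (MOrlicz Φ.toFun w) :=
  (lowerSemicontinuous_MOrlicz Φ w).measurable

end Maximal

section CoifmanRochberg

variable {n : ℕ} {Φ : YoungFunction} {w : (Fin n → ℝ) → ℝ}

theorem exists_measurableSet_cover_of_volume_lt_lintegral (g : (Fin n → ℝ) → ℝ≥0∞)
    (a : Fin n → ℝ) (h : ℝ) :
    ∃ U, MeasurableSet U ∧
      (∀ b h', 0 < h' → h' ≤ h → (cube b h' ∩ cube a h).Nonempty →
        volume (cube b h') < ∫⁻ y in cube b h', g y → cube b h' ⊆ U) ∧
      volume U ≤ 5 ^ n * ∫⁻ y in tripleCube a h, g y := by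
  set t : Set ((Fin n → ℝ) × ℝ) := {p | 0 < p.2 ∧ p.2 ≤ h ∧ (cube p.1 p.2 ∩ cube a h).Nonempty ∧
    volume (cube p.1 p.2) < ∫⁻ y in cube p.1 p.2, g y}
  obtain ⟨u, hut, hdisj, hcov⟩ := Vitali.exists_disjoint_subfamily_covering_enlargement
    (fun p => cube p.1 p.2) t Prod.snd 2 one_lt_two (fun p hp => hp.1.le) h (fun p hp => hp.2.1)
    (fun p hp => (interior_cube_nonempty p.1 hp.1).mono interior_subset)
  have hu : u.Countable :=
    hdisj.countable_of_nonempty_interior fun p hp => interior_cube_nonempty p.1 (hut hp).1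
  have htriple : ∀ p ∈ u, cube p.1 p.2 ⊆ tripleCube a h := fun p hp =>
    cube_subset_of_inter_nonempty (hut hp).2.1 (by linarith) (hut hp).2.2.1
  refine ⟨⋃ q ∈ u, cube (fun i => q.1 i - 2 * q.2) (5 * q.2),
    MeasurableSet.biUnion hu fun q _ => measurableSet_cube _ _, ?_, ?_⟩
  · intro b h' hh' hh'h hne hvol
    obtain ⟨q, hqu, hbq, hle⟩ := hcov (b, h') ⟨hh', hh'h, hne, hvol⟩
    have hq := (hut hqu).1
    exact (cube_subset_of_inter_nonempty (d := 5 * q.2) hle (by linarith) hbq).trans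
      (subset_biUnion_of_mem (u := fun q => cube (fun i => q.1 i - 2 * q.2) (5 * q.2)) hqu)
  calc volume (⋃ q ∈ u, cube (fun i => q.1 i - 2 * q.2) (5 * q.2))
      ≤ ∑' q : u, volume (cube (fun i => q.1.1 i - 2 * q.1.2) (5 * q.1.2)) :=
        measure_biUnion_le _ hu _
    _ = ∑' q : u, 5 ^ n * volume (cube q.1.1 q.1.2) := tsum_congr fun q => by
        rw [volume_cube_mul q.1.1 _ (by norm_num), ENNReal.ofReal_ofNat]
    _ ≤ 5 ^ n * ∑' q : u, ∫⁻ y in cube q.1.1 q.1.2, g y := by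
        rw [ENNReal.tsum_mul_left]
        gcongr with q
        exact (hut q.2).2.2.2.le
    _ = 5 ^ n * ∫⁻ y in ⋃ q ∈ u, cube q.1 q.2, g y := by
        rw [lintegral_biUnion hu (fun q _ => measurableSet_cube _ _) hdisj]
    _ ≤ 5 ^ n * ∫⁻ y in tripleCube a h, g y := by
        gcongr
        exact iUnion₂_subset htriple

def MOrliczLocal (Φ : ℝ → ℝ) (w : (Fin n → ℝ) → ℝ) (h : ℝ) (x : Fin n → ℝ) : ℝ≥0∞ :=
  ⨆ (b : Fin n → ℝ) (h' : ℝ) (_ : h' ∈ Ioc 0 h) (_ : x ∈ cube b h'), eLuxNorm Φ (cube b h') w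

theorem MOrlicz_le_max {a x : Fin n → ℝ} {h : ℝ} (hx : x ∈ cube a h) :
    MOrlicz Φ.toFun w x ≤ max (MOrliczLocal Φ.toFun w h x)
      (3 ^ n * essInf (MOrlicz Φ.toFun w) (volume.restrict (cube a h))) := by
  refine iSup₂_le fun Q hQ => iSup_le fun hxQ => ?_
  obtain ⟨b, h', hh', rfl⟩ := isCube_iff.1 hQ
  rcases le_or_gt h' h with hle | hlt
  · exact le_max_of_le_left (le_iSup₂_of_le b h' (le_iSup₂_of_le ⟨hh', hle⟩ hxQ le_rfl))
  · refine le_max_of_le_right ((eLuxNorm_cube_le_tripleCube b hh').trans ?_)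
    gcongr
    exact eLuxNorm_le_essInf_MOrlicz (measurableSet_cube a h) (isCube_tripleCube b hh')
      (cube_subset_of_inter_nonempty hlt.le (by linarith) ⟨x, hx, hxQ⟩)

theorem rpow_le_add_tsum_indicator {α : Type*} {t L : ℝ≥0∞} {δ : ℝ} (hL0 : L ≠ 0) (hL : L ≠ ⊤)
    (hδ : 0 ≤ δ) {U : ℕ → Set α} {x : α} (hU : ∀ k : ℕ, 2 ^ k * L < t → x ∈ U k) :
    t ^ δ ≤ L ^ δ + ∑' k : ℕ, (U k).indicator (fun _ => (2 ^ (k + 1) * L) ^ δ) x := by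
  rcases eq_or_ne t ⊤ with rfl | ht
  · calc ⊤ ^ δ ≤ ∑' _ : ℕ, L ^ δ := by
          rw [ENNReal.tsum_const_eq_top_of_ne_zero (by simp [hL0, hL])]; exact le_top
      _ ≤ ∑' k : ℕ, (U k).indicator (fun _ => (2 ^ (k + 1) * L) ^ δ) x := by
          refine ENNReal.tsum_le_tsum fun k => ?_
          rw [indicator_of_mem (hU k (mul_lt_top (by simp) hL.lt_top))]
          exact rpow_le_rpow (le_mul_of_one_le_left' (one_le_pow₀ one_le_two)) hδ
      _ ≤ _ := le_add_self
  rcases le_or_gt t L with htL | hLt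
  · exact le_add_right (rpow_le_rpow htL hδ)
  have hex : ∃ k : ℕ, t ≤ 2 ^ k * L := by
    obtain ⟨k, hk⟩ := ENNReal.exists_nat_gt (ENNReal.div_ne_top ht hL0)
    refine ⟨k, (ENNReal.div_le_iff hL0 hL).1 (hk.le.trans ?_)⟩
    exact_mod_cast Nat.lt_two_pow_self.le
  classical
  obtain ⟨k, hk⟩ : ∃ k, Nat.find hex = k + 1 :=
    Nat.exists_eq_succ_of_ne_zero fun h0 => (Nat.find_spec hex).not_gt (by simpa [h0] using hLt)
  have hkt : 2 ^ k * L < t := not_le.1 (Nat.find_min hex (by omega))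
  calc t ^ δ ≤ (2 ^ (k + 1) * L) ^ δ := rpow_le_rpow (hk ▸ Nat.find_spec hex) hδ
    _ = (U k).indicator (fun _ => (2 ^ (k + 1) * L) ^ δ) x :=
      (indicator_of_mem (hU k hkt) (fun _ => _)).symm
    _ ≤ ∑' k : ℕ, (U k).indicator (fun _ => (2 ^ (k + 1) * L) ^ δ) x := ENNReal.le_tsum k
    _ ≤ _ := le_add_self

theorem tsum_two_pow_succ_mul_rpow_mul_inv_two_pow (L : ℝ≥0∞) {δ : ℝ} (hδ : 0 ≤ δ) :
    ∑' k : ℕ, (2 ^ (k + 1) * L) ^ δ * 2⁻¹ ^ k = 2 ^ δ * (1 - 2 ^ δ / 2)⁻¹ * L ^ δ := by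
  have hterm : ∀ k : ℕ, (2 ^ (k + 1) * L) ^ δ * 2⁻¹ ^ k = 2 ^ δ * L ^ δ * (2 ^ δ / 2) ^ k := by
    intro k
    rw [ENNReal.mul_rpow_of_nonneg _ _ hδ, ← ENNReal.rpow_natCast, ← ENNReal.rpow_mul,
      mul_comm _ δ, ENNReal.rpow_mul, ENNReal.rpow_natCast, div_eq_mul_inv, mul_pow, pow_succ]
    ring
  rw [tsum_congr hterm, ENNReal.tsum_mul_left, ENNReal.tsum_geometric]
  ring

theorem exists_cover_superlevel_MOrliczLocal (a : Fin n → ℝ) {h l : ℝ} (hl : 0 < l)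
    (hadm : ∫⁻ x in tripleCube a h, ENNReal.ofReal (Φ.toFun (|w x| / l))
      ≤ volume (tripleCube a h)) :
    ∃ U : ℕ → Set (Fin n → ℝ), (∀ k, MeasurableSet (U k)) ∧
      (∀ x ∈ cube a h, ∀ k : ℕ, 2 ^ k * ENNReal.ofReal l < MOrliczLocal Φ.toFun w h x → x ∈ U k) ∧
      ∀ k, volume (U k) ≤ 15 ^ n * 2⁻¹ ^ k * volume (cube a h) := by
  choose U hUm hUcov hUvol using fun k : ℕ => exists_measurableSet_cover_of_volume_lt_lintegral
    (fun y => ENNReal.ofReal (Φ.toFun (|w y| / (2 ^ k * l)))) a h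
  refine ⟨U, hUm, fun x hx k hk => ?_, fun k => ?_⟩
  · obtain ⟨b, h', hxb, ⟨hh', hh'h⟩, hlt⟩ : ∃ b h', x ∈ cube b h' ∧ (0 < h' ∧ h' ≤ h) ∧
        2 ^ k * ENNReal.ofReal l < eLuxNorm Φ.toFun (cube b h') w := by
      simpa [MOrliczLocal, lt_iSup_iff] using hk
    rw [← ENNReal.ofReal_ofNat 2, ← ENNReal.ofReal_pow zero_le_two, ← ENNReal.ofReal_mul
      (by positivity)] at hlt
    exact hUcov k b h' hh' hh'h ⟨x, hxb, hx⟩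
      (volume_lt_lintegral_of_ofReal_lt_eLuxNorm (by positivity) hlt) hxb
  have h2k : ENNReal.ofReal ((2 : ℝ) ^ k)⁻¹ = 2⁻¹ ^ k := by
    rw [ENNReal.ofReal_inv_of_pos (by positivity), ENNReal.ofReal_pow zero_le_two,
      ENNReal.ofReal_ofNat, ENNReal.inv_pow]
  calc volume (U k)
      ≤ 5 ^ n * ∫⁻ y in tripleCube a h, ENNReal.ofReal (Φ.toFun (|w y| / (2 ^ k * l))) := hUvol k
    _ ≤ 5 ^ n * (2⁻¹ ^ k * volume (tripleCube a h)) := by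
      gcongr
      exact (lintegral_young_div_mul_le _ hl (one_le_pow₀ one_le_two)).trans
        (by rw [h2k]; gcongr)
    _ = 15 ^ n * 2⁻¹ ^ k * volume (cube a h) := by
      rw [volume_tripleCube, show (15 : ℝ≥0∞) = 5 * 3 by norm_num, mul_pow]; ring

theorem lintegral_rpow_MOrliczLocal_le {δ : ℝ} (hδ0 : 0 ≤ δ) (a : Fin n → ℝ) {h l : ℝ} (hl : 0 < l)
    (hadm : ∫⁻ x in tripleCube a h, ENNReal.ofReal (Φ.toFun (|w x| / l))
      ≤ volume (tripleCube a h)) :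
    ∫⁻ x in cube a h, MOrliczLocal Φ.toFun w h x ^ δ
      ≤ (1 + 15 ^ n * 2 ^ δ * (1 - 2 ^ δ / 2)⁻¹) * volume (cube a h) * ENNReal.ofReal l ^ δ := by
  set L := ENNReal.ofReal l
  set Q := cube a h
  obtain ⟨U, hUm, hlevel, hU_le⟩ := exists_cover_superlevel_MOrliczLocal (Φ := Φ) a hl hadm
  calc ∫⁻ x in Q, MOrliczLocal Φ.toFun w h x ^ δ
      ≤ ∫⁻ x in Q, (L ^ δ + ∑' k, (U k).indicator (fun _ => (2 ^ (k + 1) * L) ^ δ) x) :=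
        setLIntegral_mono' (measurableSet_cube a h) fun x hx =>
          rpow_le_add_tsum_indicator (by simpa [L] using hl) ofReal_ne_top hδ0 (hlevel x hx)
    _ = L ^ δ * volume Q + ∑' k : ℕ, (2 ^ (k + 1) * L) ^ δ * volume (U k ∩ Q) := by
        rw [lintegral_add_left measurable_const, setLIntegral_const,
          lintegral_tsum fun k => (measurable_const.indicator (hUm k)).aemeasurable]
        congr 1
        exact tsum_congr fun k => by
          rw [lintegral_indicator_const (hUm k), Measure.restrict_apply (hUm k)]
    _ ≤ L ^ δ * volume Q + ∑' k : ℕ, (2 ^ (k + 1) * L) ^ δ * (15 ^ n * 2⁻¹ ^ k * volume Q) := by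
        gcongr with k
        exact (measure_mono inter_subset_left).trans (hU_le k)
    _ = L ^ δ * volume Q + 15 ^ n * volume Q * ∑' k : ℕ, (2 ^ (k + 1) * L) ^ δ * 2⁻¹ ^ k := by
        rw [← ENNReal.tsum_mul_left]
        exact congrArg _ (tsum_congr fun k => by ring)
    _ = (1 + 15 ^ n * 2 ^ δ * (1 - 2 ^ δ / 2)⁻¹) * volume Q * L ^ δ := by
        rw [tsum_two_pow_succ_mul_rpow_mul_inv_two_pow L hδ0]
        ring

/-- `(3ⁿ)^δ` comes from the cubes larger than `Q`, the rest from the level sets of the small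
ones. -/
def coifmanRochbergConst (n : ℕ) (δ : ℝ) : ℝ≥0∞ :=
  (3 ^ n) ^ δ + (1 + 15 ^ n * 2 ^ δ * (1 - 2 ^ δ / 2)⁻¹)

theorem coifmanRochbergConst_ne_zero (n : ℕ) (δ : ℝ) : coifmanRochbergConst n δ ≠ 0 := by
  simp [coifmanRochbergConst]

theorem coifmanRochbergConst_ne_top (n : ℕ) {δ : ℝ} (hδ0 : 0 ≤ δ) (hδ1 : δ < 1) :
    coifmanRochbergConst n δ ≠ ⊤ := by
  have h2 : 2 ^ δ / 2 < (1 : ℝ≥0∞) := by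
    rw [ENNReal.div_lt_iff (by simp) (by simp), one_mul]
    simpa using ENNReal.rpow_lt_rpow_of_exponent_lt one_lt_two ofNat_ne_top hδ1
  have : (1 - 2 ^ δ / 2 : ℝ≥0∞)⁻¹ ≠ ⊤ := ENNReal.inv_ne_top.2 (tsub_pos_of_lt h2).ne'
  have h15 : (15 : ℝ≥0∞) ^ n * 2 ^ δ ≠ ⊤ :=
    mul_ne_top (pow_ne_top ofNat_ne_top) (ENNReal.rpow_ne_top_of_nonneg hδ0 ofNat_ne_top)
  exact add_ne_top.2 ⟨ENNReal.rpow_ne_top_of_nonneg hδ0 (pow_ne_top ofNat_ne_top),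
    add_ne_top.2 ⟨one_ne_top, mul_ne_top h15 this⟩⟩

theorem le_mul_rpow_of_forall_lt {X A K : ℝ≥0∞} {δ : ℝ} (hA : A ≠ ⊤) (hK : K ≠ ⊤)
    (h : ∀ t, A < t → t ≠ ⊤ → X ≤ K * t ^ δ) : X ≤ K * A ^ δ := by
  have hlim : Tendsto (fun t => K * t ^ δ) (𝓝[>] A) (𝓝 (K * A ^ δ)) :=
    ENNReal.Tendsto.const_mul
      ((ENNReal.continuous_rpow_const.tendsto A).mono_left nhdsWithin_le_nhds) (Or.inr hK)
  have := nhdsGT_neBot_of_exists_gt ⟨⊤, hA.lt_top⟩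
  refine ge_of_tendsto hlim ?_
  filter_upwards [self_mem_nhdsWithin, nhdsWithin_le_nhds (gt_mem_nhds hA.lt_top)]
    with t hAt ht using h t hAt ht.ne

theorem lintegral_rpow_MOrlicz_le {δ : ℝ} (hδ0 : 0 < δ) (hδ1 : δ < 1) (a : Fin n → ℝ) {h : ℝ}
    (hh : 0 < h) :
    ∫⁻ x in cube a h, MOrlicz Φ.toFun w x ^ δ ≤ coifmanRochbergConst n δ * volume (cube a h) *
      essInf (MOrlicz Φ.toFun w) (volume.restrict (cube a h)) ^ δ := by
  set A := essInf (MOrlicz Φ.toFun w) (volume.restrict (cube a h))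
  rcases eq_or_ne A ⊤ with hA | hA
  · rw [hA, ENNReal.top_rpow_of_pos hδ0, ENNReal.mul_top
      (mul_ne_zero (coifmanRochbergConst_ne_zero n δ) (volume_cube_ne_zero a hh))]
    exact le_top
  refine le_mul_rpow_of_forall_lt hA
    (mul_ne_top (coifmanRochbergConst_ne_top n hδ0.le hδ1) (volume_cube_ne_top a h)) ?_
  intro t hAt ht
  obtain ⟨_, ⟨l, hl, rfl, hadm⟩, hlt⟩ := sInf_lt_iff.1 <|
    (eLuxNorm_le_essInf_MOrlicz (w := w) (Φ := Φ) (measurableSet_cube a h)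
      (isCube_tripleCube a hh) (cube_subset_tripleCube a hh)).trans_lt hAt
  have hsplit : ∀ x ∈ cube a h, MOrlicz Φ.toFun w x ^ δ
      ≤ MOrliczLocal Φ.toFun w h x ^ δ + (3 ^ n) ^ δ * A ^ δ := fun x hx => by
    rw [← ENNReal.mul_rpow_of_nonneg _ _ hδ0.le]
    refine (rpow_le_rpow (MOrlicz_le_max hx) hδ0.le).trans ?_
    rw [ENNReal.max_rpow hδ0.le]
    exact max_le le_self_add le_add_self
  calc ∫⁻ x in cube a h, MOrlicz Φ.toFun w x ^ δ
      ≤ ∫⁻ x in cube a h, (MOrliczLocal Φ.toFun w h x ^ δ + (3 ^ n) ^ δ * A ^ δ) :=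
        setLIntegral_mono' (measurableSet_cube a h) hsplit
    _ = (∫⁻ x in cube a h, MOrliczLocal Φ.toFun w h x ^ δ)
          + (3 ^ n) ^ δ * A ^ δ * volume (cube a h) := by
        rw [lintegral_add_right _ measurable_const, setLIntegral_const]
    _ ≤ (1 + 15 ^ n * 2 ^ δ * (1 - 2 ^ δ / 2)⁻¹) * volume (cube a h) * ENNReal.ofReal l ^ δ
          + (3 ^ n) ^ δ * A ^ δ * volume (cube a h) := by
        gcongr
        exact lintegral_rpow_MOrliczLocal_le hδ0.le a hl hadm
    _ ≤ (1 + 15 ^ n * 2 ^ δ * (1 - 2 ^ δ / 2)⁻¹) * volume (cube a h) * t ^ δ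
          + (3 ^ n) ^ δ * t ^ δ * volume (cube a h) := by
        gcongr
    _ = coifmanRochbergConst n δ * volume (cube a h) * t ^ δ := by
        rw [coifmanRochbergConst]
        ring

theorem lavg_rpow_MOrlicz_le {δ : ℝ} (hδ0 : 0 < δ) (hδ1 : δ < 1) {Q : Set (Fin n → ℝ)}
    (hQ : IsCube Q) : lavg (fun x => MOrlicz Φ.toFun w x ^ δ) Q
      ≤ coifmanRochbergConst n δ *
        essInf (fun x => MOrlicz Φ.toFun w x ^ δ) (volume.restrict Q) := by
  obtain ⟨a, h, hh, rfl⟩ := isCube_iff.1 hQ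
  calc lavg (fun x => MOrlicz Φ.toFun w x ^ δ) (cube a h)
      ≤ coifmanRochbergConst n δ * essInf (MOrlicz Φ.toFun w) (volume.restrict (cube a h)) ^ δ :=
        ENNReal.div_le_of_le_mul ((lintegral_rpow_MOrlicz_le hδ0 hδ1 a hh).trans_eq (by ring))
    _ ≤ _ := by
        gcongr
        refine le_essInf_of_ae_le _ ?_
        filter_upwards [ae_essInf_le (f := MOrlicz Φ.toFun w)] with x hx
        exact rpow_le_rpow hx hδ0.le

end CoifmanRochberg

section Weights

variable {n : ℕ} {u : (Fin n → ℝ) → ℝ≥0∞} {C : ℝ≥0∞}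

theorem A1Const_le_of_lavg_le (h : ∀ Q, IsCube Q → lavg u Q ≤ C * essInf u (volume.restrict Q)) :
    A1Const u ≤ C := by
  refine iSup₂_le fun Q hQ => ?_
  rw [← ENNReal.essSup_const_mul]
  refine essSup_le_of_ae_le _ ?_
  filter_upwards [ae_essInf_le (f := u) (μ := volume.restrict Q)] with y hy
  exact ENNReal.div_le_of_le_mul ((h Q hQ).trans (by gcongr))

theorem measure_univ_div_two_le_measure_lt {α : Type*} [MeasurableSpace α] (μ : Measure α)
    [IsFiniteMeasure μ] {f : α → ℝ≥0∞} (hf : Measurable f) {B : ℝ≥0∞} (hB0 : B ≠ 0) (hB : B ≠ ⊤)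
    (hint : ∫⁻ x, f x ∂μ ≤ B * (μ univ / 2)) : μ univ / 2 ≤ μ {x | f x < B} := by
  have hge : μ {x | B ≤ f x} ≤ μ univ / 2 :=
    (ENNReal.mul_le_mul_iff_right hB0 hB).1
      ((mul_meas_ge_le_lintegral₀ hf.aemeasurable B).trans hint)
  have hcompl : {x | f x < B} = {x | B ≤ f x}ᶜ := by ext; simp
  rw [hcompl, measure_compl (measurableSet_le measurable_const hf) (measure_ne_top _ _)]
  calc μ univ / 2 = μ univ - μ univ / 2 := (ENNReal.sub_half (measure_ne_top _ _)).symm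
    _ ≤ μ univ - μ {x | B ≤ f x} := tsub_le_tsub_left hge _

theorem rpow_neg_le_rpow_neg {x y : ℝ≥0∞} (hxy : x ≤ y) {s : ℝ} (hs : 0 ≤ s) :
    y ^ (-s) ≤ x ^ (-s) := by
  rw [ENNReal.rpow_neg, ENNReal.rpow_neg]
  exact ENNReal.inv_le_inv.2 (rpow_le_rpow hxy hs)

theorem lavg_rpow_neg_eq_top {Q : Set (Fin n → ℝ)} (hQ : IsCube Q) (hu : Measurable u) {s : ℝ}
    (hs : 0 < s) (h : ∫⁻ x in Q, u x = 0) : lavg (fun x => u x ^ (-s)) Q = ⊤ := by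
  have : ∀ᵐ x ∂volume.restrict Q, u x ^ (-s) = ⊤ :=
    ((lintegral_eq_zero_iff hu).1 h).mono fun x hx => by
      rw [show u x = 0 from hx, ENNReal.zero_rpow_of_neg (neg_neg_of_pos hs)]
  rw [lavg, lintegral_congr_ae this, setLIntegral_const, ENNReal.top_mul hQ.volume_ne_zero,
    ENNReal.top_div_of_ne_top hQ.volume_ne_top]

theorem div_two_le_lavg_rpow_neg {Q : Set (Fin n → ℝ)} (hQ : IsCube Q) (hu : Measurable u)
    {B : ℝ≥0∞} (hB0 : B ≠ 0) (hB : B ≠ ⊤) {s : ℝ} (hs : 0 ≤ s)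
    (hint : ∫⁻ x in Q, u x ≤ B * (volume Q / 2)) :
    B ^ (-s) / 2 ≤ lavg (fun x => u x ^ (-s)) Q := by
  set ν := volume.restrict Q
  have : IsFiniteMeasure ν := isFiniteMeasure_restrict.2 hQ.volume_ne_top
  have hνuniv : ν univ = volume Q := Measure.restrict_apply_univ Q
  have hhalf : volume Q / 2 ≤ ν {x | u x < B} :=
    hνuniv ▸ measure_univ_div_two_le_measure_lt ν hu hB0 hB (hνuniv ▸ hint)
  rw [lavg, ENNReal.le_div_iff_mul_le (Or.inl hQ.volume_ne_zero) (Or.inl hQ.volume_ne_top)]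
  calc B ^ (-s) / 2 * volume Q = B ^ (-s) * (volume Q / 2) := by
        rw [div_eq_mul_inv, div_eq_mul_inv]; ring
    _ ≤ B ^ (-s) * ν {x | u x < B} := by gcongr
    _ = ∫⁻ _ in {x | u x < B}, B ^ (-s) ∂ν := (setLIntegral_const _ _).symm
    _ ≤ ∫⁻ x in {x | u x < B}, u x ^ (-s) ∂ν :=
      setLIntegral_mono' (measurableSet_lt hu measurable_const) fun x hx =>
        rpow_neg_le_rpow_neg (le_of_lt hx) hs
    _ ≤ ∫⁻ x in Q, u x ^ (-s) := setLIntegral_le_lintegral _ _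

theorem essSup_rpow_neg_div_lavg_le {Q : Set (Fin n → ℝ)} (hQ : IsCube Q) (hu : Measurable u)
    (hC0 : C ≠ 0) (hC : C ≠ ⊤) {s : ℝ} (hs : 0 < s)
    (h : lavg u Q ≤ C * essInf u (volume.restrict Q)) :
    essSup (fun x => u x ^ (-s)) (volume.restrict Q) / lavg (fun x => u x ^ (-s)) Q
      ≤ 2 * (2 * C) ^ s := by
  set A := essInf u (volume.restrict Q)
  have hsup : essSup (fun x => u x ^ (-s)) (volume.restrict Q) ≤ A ^ (-s) := by
    refine essSup_le_of_ae_le _ ?_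
    filter_upwards [ae_essInf_le (f := u) (μ := volume.restrict Q)] with x hx
    exact rpow_neg_le_rpow_neg hx hs.le
  have hint : ∫⁻ x in Q, u x ≤ C * A * volume Q :=
    (ENNReal.div_le_iff hQ.volume_ne_zero hQ.volume_ne_top).1 h
  rcases eq_or_ne A ⊤ with hAtop | hAtop
  · rw [hAtop, ENNReal.top_rpow_of_neg (neg_neg_of_pos hs), nonpos_iff_eq_zero] at hsup
    simp [hsup]
  rcases eq_or_ne A 0 with hA0 | hA0
  · rw [hA0, mul_zero, zero_mul, nonpos_iff_eq_zero] at hint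
    rw [lavg_rpow_neg_eq_top hQ hu hs hint, ENNReal.div_top]
    exact zero_le
  have h2C : 2 * C ≠ ⊤ := mul_ne_top ofNat_ne_top hC
  have hlow : (2 * C * A) ^ (-s) / 2 ≤ lavg (fun x => u x ^ (-s)) Q := by
    refine div_two_le_lavg_rpow_neg hQ hu (by simp [hC0, hA0]) (mul_ne_top h2C hAtop) hs.le ?_
    calc ∫⁻ x in Q, u x ≤ C * A * (2 * (volume Q / 2)) := by
          rwa [ENNReal.mul_div_cancel two_ne_zero ofNat_ne_top]
      _ = 2 * C * A * (volume Q / 2) := by ring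
  refine (ENNReal.div_le_div hsup hlow).trans (ENNReal.div_le_of_le_mul (le_of_eq ?_))
  have h2Cs0 : (2 * C) ^ s ≠ 0 := by simp [hC0, hs, hs.le]
  rw [ENNReal.mul_rpow_of_ne_top h2C hAtop, ENNReal.rpow_neg (2 * C), div_eq_mul_inv]
  calc A ^ (-s) = (2 * 2⁻¹) * ((2 * C) ^ s * ((2 * C) ^ s)⁻¹) * A ^ (-s) := by
        rw [ENNReal.mul_inv_cancel two_ne_zero ofNat_ne_top,
          ENNReal.mul_inv_cancel h2Cs0 (ENNReal.rpow_ne_top_of_nonneg hs.le h2C)]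
        simp
    _ = _ := by ring

theorem RHinftyConst_rpow_neg_le (hu : Measurable u) (hC0 : C ≠ 0) (hC : C ≠ ⊤) {s : ℝ}
    (hs : 0 < s) (h : ∀ Q, IsCube Q → lavg u Q ≤ C * essInf u (volume.restrict Q)) :
    RHinftyConst (fun x => u x ^ (-s)) ≤ 2 * (2 * C) ^ s :=
  iSup₂_le fun Q hQ => essSup_rpow_neg_div_lavg_le hQ hu hC0 hC hs (h Q hQ)

theorem A1Const_rpow_MOrlicz_le (Φ : YoungFunction) (w : (Fin n → ℝ) → ℝ) {δ : ℝ} (hδ0 : 0 < δ)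
    (hδ1 : δ < 1) : A1Const (fun x => MOrlicz Φ.toFun w x ^ δ) ≤ coifmanRochbergConst n δ :=
  A1Const_le_of_lavg_le fun _ hQ => lavg_rpow_MOrlicz_le hδ0 hδ1 hQ

theorem RHinftyConst_rpow_neg_MOrlicz_le (Φ : YoungFunction) (w : (Fin n → ℝ) → ℝ) {lam : ℝ}
    (hlam : 0 < lam) : RHinftyConst (fun x => MOrlicz Φ.toFun w x ^ (-lam))
      ≤ 2 * (2 * coifmanRochbergConst n (1 / 2)) ^ (2 * lam) := by
  have hsqrt : (fun x => MOrlicz Φ.toFun w x ^ (-lam))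
      = fun x => (MOrlicz Φ.toFun w x ^ (1 / 2 : ℝ)) ^ (-(2 * lam)) :=
    funext fun x => by rw [← ENNReal.rpow_mul]; ring_nf
  rw [hsqrt]
  exact RHinftyConst_rpow_neg_le ((measurable_MOrlicz Φ w).pow_const _)
    (coifmanRochbergConst_ne_zero n _) (coifmanRochbergConst_ne_top n (by norm_num) (by norm_num))
    (by positivity) fun _ hQ => lavg_rpow_MOrlicz_le (by norm_num) (by norm_num) hQ

end Weights

/-- For a Young function `Φ` and `w ≥ 0` with `M_Φ w < ∞` a.e.:
`[(M_Φ w)^δ]_{A₁} ≤ c(n,δ)` for every `0 < δ < 1`, and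
`[(M_Φ w)^{−λ}]_{RH_∞} ≤ c(n,λ)` for every `λ > 0`. -/
theorem orlicz_maximal_A1_and_RHinfty (n : ℕ) :
    (∀ δ : ℝ, 0 < δ → δ < 1 → ∃ c : ℝ, 0 < c ∧
      ∀ (Φ : YoungFunction) (w : (Fin n → ℝ) → ℝ), Measurable w → (∀ x, 0 ≤ w x) →
        (∀ᵐ x, MOrlicz Φ.toFun w x < ⊤) →
        A1Const (fun x => MOrlicz Φ.toFun w x ^ δ) ≤ ENNReal.ofReal c) ∧
    (∀ lam : ℝ, 0 < lam → ∃ c : ℝ, 0 < c ∧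
      ∀ (Φ : YoungFunction) (w : (Fin n → ℝ) → ℝ), Measurable w → (∀ x, 0 ≤ w x) →
        (∀ᵐ x, MOrlicz Φ.toFun w x < ⊤) →
        RHinftyConst (fun x => MOrlicz Φ.toFun w x ^ (-lam)) ≤ ENNReal.ofReal c) := by
  constructor
  · intro δ hδ0 hδ1
    have hC := coifmanRochbergConst_ne_top n hδ0.le hδ1
    refine ⟨(coifmanRochbergConst n δ).toReal,
      ENNReal.toReal_pos (coifmanRochbergConst_ne_zero n δ) hC, fun Φ w _ _ _ => ?_⟩
    rw [ENNReal.ofReal_toReal hC]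
    exact A1Const_rpow_MOrlicz_le Φ w hδ0 hδ1
  · intro lam hlam
    set C := coifmanRochbergConst n (1 / 2)
    have hC : C ≠ ⊤ := coifmanRochbergConst_ne_top n (by norm_num) (by norm_num)
    have hc0 : 2 * (2 * C) ^ (2 * lam) ≠ 0 := by
      simp [C, coifmanRochbergConst_ne_zero, hlam.le]
    have hc : 2 * (2 * C) ^ (2 * lam) ≠ ⊤ :=
      mul_ne_top ofNat_ne_top (rpow_ne_top_of_nonneg (by positivity) (mul_ne_top ofNat_ne_top hC))
    refine ⟨(2 * (2 * C) ^ (2 * lam)).toReal, ENNReal.toReal_pos hc0 hc, fun Φ w _ _ _ => ?_⟩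
    rw [ENNReal.ofReal_toReal hc]
    exact RHinftyConst_rpow_neg_MOrlicz_le Φ w hlam

end
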